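/- Let R be a commutative ring and S an R-algebra of finite projective dimension as an R-module. If B is a Gorenstein injective R-module, then Hom_R(S, B) is a Gorenstein injective S-module. -/

import Mathlib

/-!
Apply `Hom_R(S, -)` to a totally acyclic complex of injectives `L` with `B = ker (L¹ → L⁰)`.
The terms `Hom_R(S, Lⁱ)` are injective `S`-modules, left exactness keeps `Hom_R(S, B)` as the
kernel, and the adjunction `Hom_S(E, Hom_R(S, L)) ≅ Hom_R(E, L)` reduces everything else to
acyclicity of complexes `Hom_R(M, L)`. For projective `M` this is acyclicity of `L`, and since the
`Lⁱ` are injective it passes along short exact sequences in both directions (two out of three).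
Hence `Hom_R(S, L)` is acyclic because `pd_R S < ∞`, and `Hom_R(Hom_R(S, I), L)` is acyclic for
every injective `I`, because `Hom_R(S, I)` has a finite coresolution by the injectives
`Hom_R(P, I)`, `P` projective. An injective `S`-module is an `S`-linear retract of such a
`Hom_R(S, I)`.
-/

universe u

open TensorProduct

/-- A `ℤ`-indexed chain complex of `R`-modules: modules `X i` with
differentials `d i : X (i+1) →ₗ[R] X i` satisfying `d ∘ d = 0`. -/
structure ModComplex (R : Type u) [CommRing R] : Type (u + 1) where
  X : ℤ → Type u
  [addCommGroup : ∀ i, AddCommGroup (X i)]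
  [module : ∀ i, Module R (X i)]
  d : ∀ i : ℤ, X (i + 1) →ₗ[R] X i
  dd : ∀ i : ℤ, (d i).comp (d (i + 1)) = 0

attribute [instance] ModComplex.addCommGroup ModComplex.module

namespace ModComplex

variable {R : Type u} [CommRing R] (L : ModComplex R)

/-- The complex is acyclic: exact at every spot. -/
def Acyclic : Prop := ∀ i : ℤ, Function.Exact (L.d (i + 1)) (L.d i)

/-- The complex `Hom_R(L, N)` is acyclic. -/
def HomAcyclic (N : Type u) [AddCommGroup N] [Module R N] : Prop :=
  ∀ i : ℤ, Function.Exact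
    (fun φ : L.X i →ₗ[R] N => φ.comp (L.d i))
    (fun φ : L.X (i + 1) →ₗ[R] N => φ.comp (L.d (i + 1)))

/-- The complex `Hom_R(E, L)` is acyclic. -/
def CoHomAcyclic (E : Type u) [AddCommGroup E] [Module R E] : Prop :=
  ∀ i : ℤ, Function.Exact
    (fun φ : E →ₗ[R] L.X (i + 1 + 1) => (L.d (i + 1)).comp φ)
    (fun φ : E →ₗ[R] L.X (i + 1) => (L.d i).comp φ)

/-- The complex `E ⊗_R L` is acyclic. -/
def TensorAcyclic (E : Type u) [AddCommGroup E] [Module R E] : Prop :=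
  ∀ i : ℤ, Function.Exact
    (LinearMap.lTensor E (L.d (i + 1)))
    (LinearMap.lTensor E (L.d i))

/-- The complex consists of finitely generated projective modules. -/
def FGProj : Prop :=
  ∀ i : ℤ, Module.Finite R (L.X i) ∧ Module.Projective R (L.X i)

/-- A totally acyclic complex: an acyclic complex of finitely generated
projective modules such that `Hom_R(L, R)` is acyclic. -/
def TotallyAcyclic : Prop := L.Acyclic ∧ L.FGProj ∧ L.HomAcyclic R

end ModComplex

/-- `M` is (isomorphic to) the cokernel of the differential `d 0 : X 1 → X 0`. -/
def IsCokerOf {R : Type u} [CommRing R] (L : ModComplex R)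
    (M : Type u) [AddCommGroup M] [Module R M] : Prop :=
  ∃ f : L.X 0 →ₗ[R] M, Function.Surjective f ∧ LinearMap.ker f = LinearMap.range (L.d 0)

/-- `M` is (isomorphic to) the kernel of the differential `d 0 : X 1 → X 0`. -/
def IsKerOf {R : Type u} [CommRing R] (L : ModComplex R)
    (M : Type u) [AddCommGroup M] [Module R M] : Prop :=
  ∃ f : M →ₗ[R] L.X 1, Function.Injective f ∧ LinearMap.range f = LinearMap.ker (L.d 0)

/-- `M` is totally reflexive: it is a cokernel of a differential in a totally
acyclic complex of finitely generated projective modules. -/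
def IsTotallyReflexive (R : Type u) [CommRing R]
    (M : Type u) [AddCommGroup M] [Module R M] : Prop :=
  ∃ L : ModComplex R, L.TotallyAcyclic ∧ IsCokerOf L M

/-- Gorenstein projective module. -/
def IsGorensteinProjective (R : Type u) [CommRing R]
    (A : Type u) [AddCommGroup A] [Module R A] : Prop :=
  ∃ L : ModComplex R, L.Acyclic ∧ (∀ i, Module.Projective R (L.X i)) ∧
    (∀ (Q : Type u) [AddCommGroup Q] [Module R Q],
      Module.Projective R Q → L.HomAcyclic Q) ∧
    IsCokerOf L A

/-- Gorenstein injective module. -/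
def IsGorensteinInjective (R : Type u) [CommRing R]
    (B : Type u) [AddCommGroup B] [Module R B] : Prop :=
  ∃ L : ModComplex R, L.Acyclic ∧ (∀ i, Module.Injective R (L.X i)) ∧
    (∀ (E : Type u) [AddCommGroup E] [Module R E],
      Module.Injective R E → L.CoHomAcyclic E) ∧
    IsKerOf L B

/-- Gorenstein flat module. -/
def IsGorensteinFlat (R : Type u) [CommRing R]
    (M : Type u) [AddCommGroup M] [Module R M] : Prop :=
  ∃ L : ModComplex R, L.Acyclic ∧ (∀ i, Module.Flat R (L.X i)) ∧
    (∀ (E : Type u) [AddCommGroup E] [Module R E],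
      Module.Injective R E → L.TensorAcyclic E) ∧
    IsCokerOf L M

/-- `M` has projective dimension at most `n`. -/
def ProjDimLe (R : Type u) [CommRing R] :
    ℕ → ∀ (M : Type u) [AddCommGroup M] [Module R M], Prop
  | 0, M, _, _ => Module.Projective R M
  | n + 1, M, _, _ =>
    ∃ (P : Type u) (_ : AddCommGroup P) (_ : Module R P) (f : P →ₗ[R] M),
      Module.Projective R P ∧ Function.Surjective f ∧
        ProjDimLe R n (LinearMap.ker f)

/-- `M` has flat dimension at most `n`. -/
def FlatDimLe (R : Type u) [CommRing R] :
    ℕ → ∀ (M : Type u) [AddCommGroup M] [Module R M], Prop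
  | 0, M, _, _ => Module.Flat R M
  | n + 1, M, _, _ =>
    ∃ (F : Type u) (_ : AddCommGroup F) (_ : Module R F) (f : F →ₗ[R] M),
      Module.Flat R F ∧ Function.Surjective f ∧
        FlatDimLe R n (LinearMap.ker f)

/-- `M` has Gorenstein projective dimension at most `n`. -/
def GProjDimLe (R : Type u) [CommRing R] :
    ℕ → ∀ (M : Type u) [AddCommGroup M] [Module R M], Prop
  | 0, M, _, _ => IsGorensteinProjective R M
  | n + 1, M, _, _ =>
    ∃ (P : Type u) (_ : AddCommGroup P) (_ : Module R P) (f : P →ₗ[R] M),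
      IsGorensteinProjective R P ∧ Function.Surjective f ∧
        GProjDimLe R n (LinearMap.ker f)

/-- The projective dimension, as an element of `ℕ∞`. -/
noncomputable def projDim (R : Type u) [CommRing R]
    (M : Type u) [AddCommGroup M] [Module R M] : ℕ∞ :=
  sInf {n : ℕ∞ | ∃ m : ℕ, n = m ∧ ProjDimLe R m M}

/-- The Gorenstein projective dimension, as an element of `ℕ∞`. -/
noncomputable def gProjDim (R : Type u) [CommRing R]
    (M : Type u) [AddCommGroup M] [Module R M] : ℕ∞ :=
  sInf {n : ℕ∞ | ∃ m : ℕ, n = m ∧ GProjDimLe R m M}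

/-- The `S`-module structure on `Hom_R(S, B)`, via `(s • f) t = f (s * t)`. -/
noncomputable instance homDomainModule {R : Type u} [CommRing R]
    (S : Type u) [CommRing S] [Algebra R S]
    (B : Type u) [AddCommGroup B] [Module R B] :
    Module S (S →ₗ[R] B) where
  smul s f := f.comp (LinearMap.mul R S s)
  one_smul f := by ext t; show f (1 * t) = f t; rw [one_mul]
  mul_smul s₁ s₂ f := by
    ext t
    show f (s₁ * s₂ * t) = f (s₂ * (s₁ * t))
    congr 1
    ring
  smul_zero s := rfl
  smul_add s f g := rfl
  add_smul s₁ s₂ f := by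
    ext t
    show f ((s₁ + s₂) * t) = f (s₁ * t) + f (s₂ * t)
    rw [add_mul, map_add]
  zero_smul f := by
    ext t
    show f (0 * t) = 0
    rw [zero_mul, map_zero]

open LinearMap

section LinearAlgebra

variable {R : Type u} [CommRing R]
  {M N P Q : Type u} [AddCommGroup M] [AddCommGroup N] [AddCommGroup P] [AddCommGroup Q]
  [Module R M] [Module R N] [Module R P] [Module R Q]

theorem Function.Exact.linearMapComp_left {f : M →ₗ[R] N} {g : N →ₗ[R] P}
    (hfg : Function.Exact f g) (hf : Function.Injective f) :
    Function.Exact (fun h : Q →ₗ[R] M ↦ f ∘ₗ h) (fun h : Q →ₗ[R] N ↦ g ∘ₗ h) := by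
  refine fun h ↦ ⟨fun hh ↦ ?_, ?_⟩
  · have hrange : ∀ q, h q ∈ range f := fun q ↦ (hfg (h q)).mp (LinearMap.congr_fun hh q)
    exact ⟨(LinearEquiv.ofInjective f hf).symm.toLinearMap ∘ₗ h.codRestrict _ hrange,
      by ext q; simp⟩
  · rintro ⟨k, rfl⟩
    show g ∘ₗ f ∘ₗ k = 0
    rw [← LinearMap.comp_assoc, hfg.linearMap_comp_eq_zero, zero_comp]

theorem Module.injective_linearMap_of_projective [Module.Projective R P]
    [Module.Injective R Q] : Module.Injective R (P →ₗ[R] Q) where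
  out X Y _ _ _ _ f hf g := by
    -- `Hom(-, Hom(P, Q)) ≅ Hom(- ⊗ P, Q)`, and `- ⊗ P` preserves injections since `P` is flat
    obtain ⟨h, hh⟩ := Module.Injective.extension_property R Q _ _ (f.rTensor P)
      (Module.Flat.rTensor_preserves_injective_linearMap f hf) (TensorProduct.lift g)
    refine ⟨TensorProduct.curry h, fun x ↦ ?_⟩
    ext p
    simpa using LinearMap.congr_fun hh (x ⊗ₜ p)

theorem Module.exists_injective_embedding_into_injective (M : Type u) [AddCommGroup M]
    [Module R M] : ∃ (I : Type u) (_ : AddCommGroup I) (_ : Module R I),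
      Module.Injective R I ∧ ∃ e : M →ₗ[R] I, Function.Injective e := by
  let I := CategoryTheory.Injective.under (ModuleCat.of R M)
  have : CategoryTheory.Injective (ModuleCat.of R I) :=
    CategoryTheory.Injective.injective_under _
  exact ⟨I, inferInstance, inferInstance, Module.injective_module_of_injective_object R I,
    (CategoryTheory.Injective.ι (ModuleCat.of R M)).hom,
    (ModuleCat.mono_iff_injective _).mp inferInstance⟩

end LinearAlgebra

namespace ModComplex

variable {R : Type u} [CommRing R] (L : ModComplex R)
  {E F : Type u} [AddCommGroup E] [AddCommGroup F] [Module R E] [Module R F]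

theorem coHomAcyclic_iff : L.CoHomAcyclic E ↔ ∀ (i : ℤ) (φ : E →ₗ[R] L.X (i + 1)),
    L.d i ∘ₗ φ = 0 → ∃ ψ : E →ₗ[R] L.X (i + 1 + 1), L.d (i + 1) ∘ₗ ψ = φ := by
  refine forall_congr' fun i ↦ ⟨fun h φ ↦ (h φ).mp, fun h φ ↦ ⟨h φ, ?_⟩⟩
  rintro ⟨ψ, rfl⟩
  show L.d i ∘ₗ L.d (i + 1) ∘ₗ ψ = 0
  rw [← LinearMap.comp_assoc, L.dd, zero_comp]

theorem coHomAcyclic_of_projective (hL : L.Acyclic) [Module.Projective R E] :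
    L.CoHomAcyclic E := by
  refine L.coHomAcyclic_iff.mpr fun i φ hφ ↦ ?_
  have hrange : ∀ x, φ x ∈ range (L.d (i + 1)) :=
    fun x ↦ (hL i (φ x)).mp (LinearMap.congr_fun hφ x)
  obtain ⟨ψ, hψ⟩ := Module.projective_lifting_property (L.d (i + 1)).rangeRestrict
    (φ.codRestrict _ hrange) (L.d (i + 1)).surjective_rangeRestrict
  exact ⟨ψ, by ext x; exact Subtype.ext_iff.mp (LinearMap.congr_fun hψ x)⟩

theorem CoHomAcyclic.of_retract {L : ModComplex R} (hF : L.CoHomAcyclic F) (j : E →ₗ[R] F)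
    (p : F →ₗ[R] E) (hpj : p ∘ₗ j = LinearMap.id) : L.CoHomAcyclic E := by
  refine L.coHomAcyclic_iff.mpr fun i φ hφ ↦ ?_
  obtain ⟨ψ, hψ⟩ := L.coHomAcyclic_iff.mp hF i (φ ∘ₗ p)
    (by rw [← LinearMap.comp_assoc, hφ, zero_comp])
  exact ⟨ψ ∘ₗ j, by rw [← LinearMap.comp_assoc, hψ, LinearMap.comp_assoc, hpj, comp_id]⟩

section ShortExact

variable {L} {A B C : Type u} [AddCommGroup A] [AddCommGroup B] [AddCommGroup C]
  [Module R A] [Module R B] [Module R C] {ι : A →ₗ[R] B} {π : B →ₗ[R] C}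

theorem coHomAcyclic_of_shortExact_right (hX : ∀ i, Module.Injective R (L.X i))
    (hι : Function.Injective ι) (hιπ : Function.Exact ι π) (hπ : Function.Surjective π)
    (hA : L.CoHomAcyclic A) (hB : L.CoHomAcyclic B) : L.CoHomAcyclic C := by
  rw [coHomAcyclic_iff] at hA hB ⊢
  intro i φ hφ
  obtain ⟨β, hβ⟩ := hB i (φ ∘ₗ π) (by rw [← LinearMap.comp_assoc, hφ, zero_comp])
  obtain ⟨α, hα⟩ := hA (i + 1) (β ∘ₗ ι) (by
    rw [← LinearMap.comp_assoc, hβ, LinearMap.comp_assoc, hιπ.linearMap_comp_eq_zero,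
      comp_zero])
  have := hX (i + 1 + 1 + 1)
  obtain ⟨α', hα'⟩ := Module.Injective.extension_property R _ _ _ ι hι α
  -- `β` is corrected by the boundary of an extension of `α` so that it vanishes on `A`
  obtain ⟨ψ, hψ : ψ ∘ₗ π = β - L.d (i + 1 + 1) ∘ₗ α'⟩ :=
    (exact_lcomp_of_exact_of_surjective _ hιπ hπ (β - L.d (i + 1 + 1) ∘ₗ α')).mp
      (by rw [lcomp_apply', sub_comp, LinearMap.comp_assoc, hα', hα, sub_self])
  refine ⟨ψ, (LinearMap.cancel_right hπ).mp ?_⟩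
  rw [LinearMap.comp_assoc, hψ, comp_sub, hβ, ← LinearMap.comp_assoc, L.dd, zero_comp,
    sub_zero]

theorem coHomAcyclic_of_shortExact_left (hX : ∀ i, Module.Injective R (L.X i))
    (hι : Function.Injective ι) (hιπ : Function.Exact ι π) (hπ : Function.Surjective π)
    (hB : L.CoHomAcyclic B) (hC : L.CoHomAcyclic C) : L.CoHomAcyclic A := by
  rw [coHomAcyclic_iff] at hB hC ⊢
  intro i φ hφ
  obtain ⟨k, rfl⟩ : ∃ k, i = k + 1 := ⟨i - 1, by omega⟩
  have := hX (k + 1 + 1)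
  obtain ⟨φ', hφ'⟩ := Module.Injective.extension_property R _ _ _ ι hι φ
  obtain ⟨γ, hγ : γ ∘ₗ π = L.d (k + 1) ∘ₗ φ'⟩ :=
    (exact_lcomp_of_exact_of_surjective _ hιπ hπ (L.d (k + 1) ∘ₗ φ')).mp
      (by rw [lcomp_apply', LinearMap.comp_assoc, hφ', hφ])
  have hγ_cycle : L.d k ∘ₗ γ = 0 := (LinearMap.cancel_right hπ).mp (by
    rw [LinearMap.comp_assoc, hγ, ← LinearMap.comp_assoc, L.dd, zero_comp, zero_comp])
  obtain ⟨δ, hδ⟩ := hC k γ hγ_cycle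
  obtain ⟨ε, hε⟩ := hB (k + 1) (φ' - δ ∘ₗ π) (by
    rw [comp_sub, ← LinearMap.comp_assoc, hδ, hγ, sub_self])
  refine ⟨ε ∘ₗ ι, ?_⟩
  rw [← LinearMap.comp_assoc, hε, sub_comp, hφ', LinearMap.comp_assoc,
    hιπ.linearMap_comp_eq_zero, comp_zero, sub_zero]

end ShortExact

theorem coHomAcyclic_of_projDimLe (hL : L.Acyclic) (hX : ∀ i, Module.Injective R (L.X i)) :
    ∀ (n : ℕ) (M : Type u) [AddCommGroup M] [Module R M], ProjDimLe R n M →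
      L.CoHomAcyclic M
  | 0, M, _, _, hM => haveI : Module.Projective R M := hM; L.coHomAcyclic_of_projective hL
  | n + 1, _, _, _, ⟨_, _, _, f, hP, hf, hK⟩ =>
    haveI := hP
    coHomAcyclic_of_shortExact_right hX (ker f).injective_subtype (exact_subtype_ker_map f) hf
      (coHomAcyclic_of_projDimLe hL hX n _ hK) (L.coHomAcyclic_of_projective hL)

theorem coHomAcyclic_linearMap_of_projDimLe
    (hL : ∀ (E : Type u) [AddCommGroup E] [Module R E], Module.Injective R E →
      L.CoHomAcyclic E)
    (hX : ∀ i, Module.Injective R (L.X i)) (I : Type u) [AddCommGroup I] [Module R I]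
    [Module.Injective R I] : ∀ (n : ℕ) (M : Type u) [AddCommGroup M] [Module R M],
      ProjDimLe R n M → L.CoHomAcyclic (M →ₗ[R] I)
  | 0, M, _, _, hM =>
    haveI : Module.Projective R M := hM
    hL _ Module.injective_linearMap_of_projective
  | n + 1, _, _, _, ⟨_, _, _, f, hP, hf, hK⟩ =>
    haveI := hP
    coHomAcyclic_of_shortExact_left hX (lcomp_injective_of_surjective f hf)
      (exact_lcomp_of_exact_of_surjective _ (exact_subtype_ker_map f) hf)
      (fun g ↦ Module.Injective.extension_property R I _ _ _ (ker f).injective_subtype g)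
      (hL _ Module.injective_linearMap_of_projective)
      (coHomAcyclic_linearMap_of_projDimLe hL hX I n _ hK)

end ModComplex

section CoextendScalars

variable {R : Type u} [CommRing R] (S : Type u) [CommRing S] [Algebra R S]
  {W W' : Type u} [AddCommGroup W] [AddCommGroup W'] [Module R W] [Module R W']

theorem homDomainModule_smul_apply (s : S) (g : S →ₗ[R] W) (t : S) : (s • g) t = g (s * t) :=
  rfl

instance isScalarTower_homDomainModule : IsScalarTower R S (S →ₗ[R] W) :=
  ⟨fun r s g ↦ by ext t; simp [homDomainModule_smul_apply]⟩

noncomputable def LinearMap.coextendScalars (f : W →ₗ[R] W') :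
    (S →ₗ[R] W) →ₗ[S] (S →ₗ[R] W') where
  toFun g := f ∘ₗ g
  map_add' g₁ g₂ := comp_add g₁ g₂ f
  map_smul' _ _ := rfl

variable {S} {E E' : Type u} [AddCommGroup E] [Module R E] [Module S E] [IsScalarTower R S E]
  [AddCommGroup E'] [Module R E'] [Module S E'] [IsScalarTower R S E']

noncomputable def coextendScalarsHomEquiv : (E →ₗ[S] (S →ₗ[R] W)) ≃ (E →ₗ[R] W) where
  toFun φ := LinearMap.applyₗ (1 : S) ∘ₗ φ.restrictScalars R
  invFun u :=
    { toFun x := u ∘ₗ (LinearMap.toSpanSingleton S E x).restrictScalars R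
      map_add' x y := by ext s; simp
      map_smul' s x := by ext t; simp [homDomainModule_smul_apply, smul_smul, mul_comm] }
  left_inv φ := by ext x s; simp [homDomainModule_smul_apply]
  right_inv u := by ext x; simp

theorem coextendScalarsHomEquiv_symm_apply (u : E →ₗ[R] W) (x : E) (s : S) :
    coextendScalarsHomEquiv.symm u x s = u (s • x) :=
  rfl

theorem coextendScalarsHomEquiv_comp_right (φ : E →ₗ[S] (S →ₗ[R] W)) (g : E' →ₗ[S] E) :
    coextendScalarsHomEquiv (φ ∘ₗ g) = coextendScalarsHomEquiv φ ∘ₗ g.restrictScalars R :=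
  rfl

instance Module.Injective.homDomainModule (I : Type u) [AddCommGroup I] [Module R I]
    [Module.Injective R I] :
    Module.Injective S (S →ₗ[R] I) where
  out X Y _ _ _ _ f hf g := by
    let _ : Module R X := Module.compHom X (algebraMap R S)
    let _ : Module R Y := Module.compHom Y (algebraMap R S)
    have : IsScalarTower R S X := .of_algebraMap_smul fun _ _ ↦ rfl
    have : IsScalarTower R S Y := .of_algebraMap_smul fun _ _ ↦ rfl
    obtain ⟨h, hh⟩ := Module.Injective.extension_property R I X Y (f.restrictScalars R) hf
      (coextendScalarsHomEquiv g)
    have hcomp : coextendScalarsHomEquiv.symm h ∘ₗ f = g := coextendScalarsHomEquiv.injective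
      (by rw [coextendScalarsHomEquiv_comp_right, Equiv.apply_symm_apply, hh])
    exact ⟨coextendScalarsHomEquiv.symm h, LinearMap.congr_fun hcomp⟩

theorem exists_retract_coextendScalars_of_injective (hE : Module.Injective S E) :
    ∃ (I : Type u) (_ : AddCommGroup I) (_ : Module R I), Module.Injective R I ∧
      ∃ (j : E →ₗ[S] (S →ₗ[R] I)) (p : (S →ₗ[R] I) →ₗ[S] E), p ∘ₗ j = LinearMap.id := by
  obtain ⟨I, _, _, hI, e, he⟩ := Module.exists_injective_embedding_into_injective (R := R) E
  let j : E →ₗ[S] (S →ₗ[R] I) := coextendScalarsHomEquiv.symm e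
  have hj : Function.Injective j := fun x y hxy ↦
    he (by simpa [j, coextendScalarsHomEquiv_symm_apply] using LinearMap.congr_fun hxy 1)
  obtain ⟨p, hp⟩ := Module.Injective.extension_property S E _ _ j hj LinearMap.id
  exact ⟨I, _, _, hI, j, p, hp⟩

end CoextendScalars

namespace ModComplex

variable {R : Type u} [CommRing R] (S : Type u) [CommRing S] [Algebra R S] (L : ModComplex R)

noncomputable def coextendScalars : ModComplex S where
  X i := S →ₗ[R] L.X i
  d i := (L.d i).coextendScalars S
  dd i := by
    ext g t
    exact LinearMap.congr_fun (L.dd i) (g t)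

theorem acyclic_coextendScalars_iff : (L.coextendScalars S).Acyclic ↔ L.CoHomAcyclic S :=
  Iff.rfl

theorem coHomAcyclic_coextendScalars_iff (E : Type u) [AddCommGroup E] [Module R E]
    [Module S E] [IsScalarTower R S E] :
    (L.coextendScalars S).CoHomAcyclic E ↔ L.CoHomAcyclic E := by
  rw [coHomAcyclic_iff, coHomAcyclic_iff]
  -- `coextendScalarsHomEquiv` commutes definitionally with postcomposition by the differentials
  refine forall_congr' fun i ↦ coextendScalarsHomEquiv.forall_congr fun φ ↦ ?_
  refine imp_congr ?_ (coextendScalarsHomEquiv.exists_congr fun ψ ↦ ?_)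
  · exact coextendScalarsHomEquiv.apply_eq_iff_eq.symm
  · exact coextendScalarsHomEquiv.apply_eq_iff_eq.symm

theorem isKerOf_coextendScalars {B : Type u} [AddCommGroup B] [Module R B] (hB : IsKerOf L B) :
    IsKerOf (L.coextendScalars S) (S →ₗ[R] B) := by
  obtain ⟨f, hf, hrange⟩ := hB
  refine ⟨f.coextendScalars S, hf.injective_linearMapComp_left, ?_⟩
  exact (LinearMap.exact_iff.mp
    ((LinearMap.exact_iff.mpr hrange.symm).linearMapComp_left (Q := S) hf)).symm

end ModComplex

/-- If `S` is an `R`-algebra of finite projective dimension and `B` is a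
Gorenstein injective `R`-module, then `Hom_R(S, B)` is a Gorenstein injective
`S`-module. -/
theorem gorensteinInjective_coBaseChange {R : Type u} [CommRing R]
    (S : Type u) [CommRing S] [Algebra R S]
    (hS : ∃ n : ℕ, ProjDimLe R n S)
    (B : Type u) [AddCommGroup B] [Module R B]
    (hB : IsGorensteinInjective R B) :
    IsGorensteinInjective S (S →ₗ[R] B) := by
  obtain ⟨n, hS⟩ := hS
  obtain ⟨L, hL, hX, hLE, hB⟩ := hB
  refine ⟨L.coextendScalars S, (L.acyclic_coextendScalars_iff S).mpr
    (L.coHomAcyclic_of_projDimLe hL hX n S hS), fun i ↦ ?_, fun E _ _ hE ↦ ?_,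
    L.isKerOf_coextendScalars S hB⟩
  · have := hX i
    exact inferInstanceAs (Module.Injective S (S →ₗ[R] L.X i))
  · let _ : Module R E := Module.compHom E (algebraMap R S)
    have : IsScalarTower R S E := .of_algebraMap_smul fun _ _ ↦ rfl
    obtain ⟨I, _, _, hI, j, p, hpj⟩ :=
      exists_retract_coextendScalars_of_injective (R := R) (S := S) hE
    rw [L.coHomAcyclic_coextendScalars_iff S E]
    exact (L.coHomAcyclic_linearMap_of_projDimLe hLE hX I n S hS).of_retract
      (j.restrictScalars R) (p.restrictScalars R) (congrArg (LinearMap.restrictScalars R) hpj)
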